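/- The distance between any two distinct points of the set A is at least 1. -/

import Mathlib

open Metric MeasureTheory Filter Matrix
open scoped RealInnerProductSpace

noncomputable section

/-- The point (x, y, z) in Euclidean 3-space. -/
def pt (x y z : ℝ) : EuclideanSpace ℝ (Fin 3) :=
  (WithLp.equiv 2 (Fin 3 → ℝ)).symm ![x, y, z]

/-- The line through `P` with direction vector `v`. -/
def line (P v : EuclideanSpace ℝ (Fin 3)) : Set (EuclideanSpace ℝ (Fin 3)) :=
  {p | ∃ t : ℝ, p = P + t • v}

/-- Two direction vectors are parallel if they are scalar multiples of each other. -/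
def Parallel3 (v w : EuclideanSpace ℝ (Fin 3)) : Prop :=
  ∃ c : ℝ, w = c • v ∨ v = c • w

/-- The infinite circular cylinder of axis `l` and radius `ρ`. -/
def cylinder (l : Set (EuclideanSpace ℝ (Fin 3))) (ρ : ℝ) : Set (EuclideanSpace ℝ (Fin 3)) :=
  {p | Metric.infDist p l ≤ ρ}

/-- The angle θ_d = π / (3 · 2^{m(d)}), where 2^{m(d)} ≤ d < 2^{m(d)+1}. -/
def theta (d : ℕ) : ℝ := Real.pi / (3 * 2 ^ Nat.log 2 d)

/-- The ring of points at distance `d` from the origin. -/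
def Aring (d : ℕ) : Set (EuclideanSpace ℝ (Fin 3)) :=
  {p | ∃ k : ℕ, 1 ≤ k ∧ k ≤ 6 * 2 ^ Nat.log 2 d ∧
    p = pt (d * Real.cos (k * theta d)) (d * Real.sin (k * theta d)) 0}

/-- The point set 𝒜 = ⋃_{d ≥ 32} 𝒜_d. -/
def Aset : Set (EuclideanSpace ℝ (Fin 3)) := ⋃ d ∈ Set.Ici 32, Aring d

/-! Every point of `A_d` lies on the circle of radius `d` in the plane `z = 0`, so points of
different rings are at distance at least `|d - d'| ≥ 1`. Two points of the same ring subtend an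
angle `j θ_d` with `0 < j < N := 6 · 2^m`, so they are at distance
`2 d sin (j π / N) ≥ 2 · 2^m sin (π / N)`. Concavity of `sin` on `[0, π]`, compared with the chord
from `0` to `π / 6`, gives `sin (π / (6 n)) ≥ 1 / (2 n)`, hence the bound `1`. -/

namespace Real

lemma half_le_sin_pi_div_six_mul {x : ℝ} (hx : 0 ≤ x) (hx' : x ≤ 1) :
    x / 2 ≤ sin (π / 6 * x) := by
  have hπ := pi_pos
  have hmem : π / 6 ∈ Set.Icc 0 π := ⟨by positivity, by linarith⟩
  have h := strictConcaveOn_sin_Icc.concaveOn.2 ⟨le_rfl, hπ.le⟩ hmem (sub_nonneg.2 hx') hx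
    (by ring)
  simp only [smul_eq_mul, mul_zero, zero_add, sin_zero, sin_pi_div_six] at h
  rw [mul_comm]
  linarith

lemma sin_le_sin_of_mem_Icc {s x : ℝ} (hs : 0 ≤ s) (hsπ : s ≤ π / 2)
    (hx : x ∈ Set.Icc s (π - s)) : sin s ≤ sin x := by
  obtain ⟨h₁, h₂⟩ := hx
  rcases le_total x (π / 2) with h | h
  · exact sin_le_sin_of_le_of_le_pi_div_two (by linarith [pi_pos]) h h₁
  · rw [← sin_pi_sub x]
    exact sin_le_sin_of_le_of_le_pi_div_two (by linarith [pi_pos]) (by linarith) (by linarith)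

end Real

open Real in
lemma one_le_two_mul_sin_mul_pi_div {n : ℕ} (hn : 0 < n) {r : ℝ} (hr : n ≤ r) {j : ℕ}
    (hj : 0 < j) (hjn : j < 6 * n) : 1 ≤ 2 * r * sin (j * π / (6 * n)) := by
  have hn₁ : (1 : ℝ) ≤ n := by exact_mod_cast hn
  have hj₁ : (1 : ℝ) ≤ j := by exact_mod_cast hj
  have hjn' : (j : ℝ) + 1 ≤ 6 * n := by exact_mod_cast hjn
  have hπ := pi_pos
  set s := π / (6 * n) with hs
  have hsin_s : 1 / (2 * n) ≤ sin s := by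
    have := half_le_sin_pi_div_six_mul (inv_nonneg.2 (by linarith)) (inv_le_one_of_one_le₀ hn₁)
    rwa [show π / 6 * (n : ℝ)⁻¹ = s by rw [hs]; ring, show (n : ℝ)⁻¹ / 2 = 1 / (2 * n) by ring]
      at this
  have hsin_js : sin s ≤ sin (j * π / (6 * n)) := by
    refine sin_le_sin_of_mem_Icc (by positivity) ?_ ?_
    · rw [hs]; gcongr; linarith
    · have hns : 6 * n * s = π := by rw [hs]; field_simp
      rw [mul_div_assoc, ← hs]
      constructor <;> nlinarith
  have hr₀ : 0 ≤ 2 * r := by linarith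
  calc (1 : ℝ) = 2 * n * (1 / (2 * n)) := by field_simp
    _ ≤ 2 * r * sin (j * π / (6 * n)) := by gcongr; exact hsin_s.trans hsin_js

lemma norm_pt (x y z : ℝ) : ‖pt x y z‖ = √(x ^ 2 + y ^ 2 + z ^ 2) := by
  simp [EuclideanSpace.norm_eq, pt, Fin.sum_univ_three, add_assoc]

lemma dist_pt_pt (x y z x' y' z' : ℝ) :
    dist (pt x y z) (pt x' y' z') = √((x - x') ^ 2 + (y - y') ^ 2 + (z - z') ^ 2) := by
  simp [EuclideanSpace.dist_eq, pt, Fin.sum_univ_three, Real.dist_eq, sq_abs, add_assoc]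

def polarPt (r α : ℝ) : EuclideanSpace ℝ (Fin 3) :=
  pt (r * Real.cos α) (r * Real.sin α) 0

lemma norm_polarPt {r : ℝ} (hr : 0 ≤ r) (α : ℝ) : ‖polarPt r α‖ = r := by
  rw [polarPt, norm_pt]
  conv_rhs => rw [← Real.sqrt_sq hr]
  congr 1
  linear_combination r ^ 2 * Real.sin_sq_add_cos_sq α

lemma dist_polarPt_polarPt (r α β : ℝ) :
    dist (polarPt r α) (polarPt r β) = |2 * r * Real.sin ((α - β) / 2)| := by
  rw [polarPt, polarPt, dist_pt_pt, ← Real.sqrt_sq_eq_abs]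
  congr 1
  have hcos := Real.cos_sq ((α - β) / 2)
  rw [show 2 * ((α - β) / 2) = α - β by ring, Real.cos_sub] at hcos
  linear_combination r ^ 2 * Real.sin_sq_add_cos_sq α + r ^ 2 * Real.sin_sq_add_cos_sq β
    - 4 * r ^ 2 * Real.sin_sq ((α - β) / 2) + 4 * r ^ 2 * hcos

lemma abs_sub_le_dist_polarPt {r s : ℝ} (hr : 0 ≤ r) (hs : 0 ≤ s) (α β : ℝ) :
    |r - s| ≤ dist (polarPt r α) (polarPt s β) := by
  simpa only [norm_polarPt hr, norm_polarPt hs, dist_eq_norm] using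
    abs_norm_sub_norm_le (polarPt r α) (polarPt s β)

lemma one_le_dist_of_mem_Aring {d : ℕ} (hd : d ≠ 0) {p q : EuclideanSpace ℝ (Fin 3)}
    (hp : p ∈ Aring d) (hq : q ∈ Aring d) (hpq : p ≠ q) : 1 ≤ dist p q := by
  obtain ⟨k, hk, hkN, rfl⟩ := hp
  obtain ⟨k', hk', hkN', rfl⟩ := hq
  wlog hlt : k' < k generalizing k k'
  · rw [dist_comm]
    refine this k' hk' hkN' k hk hkN hpq.symm ?_
    exact lt_of_le_of_ne (not_lt.1 hlt) (by rintro rfl; exact hpq rfl)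
  set n := 2 ^ Nat.log 2 d
  have hn : n ≤ d := Nat.pow_log_le_self 2 hd
  have hangle : ((k : ℝ) * theta d - k' * theta d) / 2 = ↑(k - k') * Real.pi / (6 * n) := by
    rw [theta, Nat.cast_sub hlt.le]
    simp only [n]
    push_cast
    ring
  calc (1 : ℝ) ≤ 2 * d * Real.sin (↑(k - k') * Real.pi / (6 * n)) :=
        one_le_two_mul_sin_mul_pi_div (by positivity) (by exact_mod_cast hn) (by omega)
          (by omega)
    _ ≤ dist (polarPt d (k * theta d)) (polarPt d (k' * theta d)) := by
        rw [dist_polarPt_polarPt, hangle]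
        exact le_abs_self _

lemma one_le_dist_of_mem_Aring_of_ne {d d' : ℕ} (hdd' : d ≠ d') {p q : EuclideanSpace ℝ (Fin 3)}
    (hp : p ∈ Aring d) (hq : q ∈ Aring d') : 1 ≤ dist p q := by
  obtain ⟨k, -, -, rfl⟩ := hp
  obtain ⟨k', -, -, rfl⟩ := hq
  have h : (1 : ℝ) ≤ |(d : ℝ) - d'| := by
    exact_mod_cast Int.one_le_abs (sub_ne_zero.2 (Int.natCast_inj.not.2 hdd'))
  exact h.trans (abs_sub_le_dist_polarPt d.cast_nonneg d'.cast_nonneg _ _)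

theorem stmt_6 :
    ∀ p ∈ Aset, ∀ q ∈ Aset, p ≠ q → 1 ≤ dist p q := by
  intro p hp q hq hpq
  obtain ⟨d, hd, hp⟩ := Set.mem_iUnion₂.1 hp
  obtain ⟨d', -, hq⟩ := Set.mem_iUnion₂.1 hq
  rcases eq_or_ne d d' with rfl | hdd'
  · exact one_le_dist_of_mem_Aring (by rw [Set.mem_Ici] at hd; omega) hp hq hpq
  · exact one_le_dist_of_mem_Aring_of_ne hdd' hp hq
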